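/- Let d ≥ 1, γ ∈ (0,1], 0 < α ≤ 1/γ, Δ ∈ (0,1], C > 0 and ρ̄ > 0. Set a₀ := (Δ^{α/d}, …, Δ^{α/d}) ∈ ℝ^d and define φ₀ : ℝ^d → ℝ by φ₀(x) = 1/2 − C·min{Δ, Δ^{αγ/d}·ψ̃_γ(Δ^{−α/d}·(x − a₀))}, where ψ̃_γ(u) = (1 − ‖u‖_∞)^γ if ‖u‖_∞ ≤ 1 and 0 otherwise. Let μ be a measure on ℝ^d satisfying μ(A) ≤ ρ̄·λ(A ∩ [0,1]^d) for every Borel set A, where λ is Lebesgue measure. Then for every δ ∈ (0,1], μ{x ∈ ℝ^d : 0 < |φ₀(x) − 1/2| ≤ δ} ≤ 2^d · d · ρ̄ · C^{−α} · δ^α. -/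

import Mathlib

open MeasureTheory

/-!
Write `r = Δ^{α/d}` and `a₀` for the centre of the bump. Then
`|φ₀(x) − 1/2| = C · min {Δ, (r − ‖x − a₀‖)₊^γ}`, so the margin set lies in the ball `B(a₀, r)`.
If `Δ ≤ δ/C` this suffices: `λ(B(a₀, r)) = 2^d r^d = 2^d Δ^α ≤ 2^d (δ/C)^α`. Otherwise the minimum
is the bump term, and the margin set lies in the shell `r − (δ/C)^{1/γ} ≤ ‖x − a₀‖ ≤ r`, whose
volume is at most `2^d d r^{d−1} (δ/C)^{1/γ} ≤ 2^d d (δ/C)^α` because `r ≤ 1`, `δ/C < 1` and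
`α ≤ 1/γ`.
-/

/-- The bump function `ψ̃_γ(u) = (1 - ‖u‖_∞)^γ` for `‖u‖_∞ ≤ 1`, `0` otherwise. -/
noncomputable def psiTilde (d : ℕ) (γ : ℝ) (u : Fin d → ℝ) : ℝ :=
  if ‖u‖ ≤ 1 then (1 - ‖u‖) ^ γ else 0

/-- The nominal payoff function
`φ₀(x) = 1/2 − C · min {Δ, Δ^{αγ/d} · ψ̃_γ(Δ^{−α/d} (x − a₀))}`, where
`a₀ = (Δ^{α/d}, …, Δ^{α/d})`. -/
noncomputable def phi0 (d : ℕ) (γ α Δ C : ℝ) (x : Fin d → ℝ) : ℝ :=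
  1 / 2 - C * min Δ (Δ ^ (α * γ / (d : ℝ)) *
    psiTilde d γ (Δ ^ (-(α / (d : ℝ))) • (x - fun _ => Δ ^ (α / (d : ℝ)))))

open Metric Module Measure

theorem addHaar_closedBall_diff_ball_le {E : Type*} [NormedAddCommGroup E] [NormedSpace ℝ E]
    [MeasurableSpace E] [BorelSpace E] [FiniteDimensional ℝ E] [Nontrivial E]
    (μ : Measure E) [μ.IsAddHaarMeasure] (x : E) {r s : ℝ} (hs : 0 ≤ s) (hsr : s ≤ r) :
    μ (closedBall x r \ ball x s) ≤
      ENNReal.ofReal (finrank ℝ E * r ^ (finrank ℝ E - 1) * (r - s)) * μ (ball 0 1) := by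
  have hr : 0 ≤ r := hs.trans hsr
  rw [measure_sdiff (ball_subset_closedBall.trans (closedBall_subset_closedBall hsr))
      measurableSet_ball.nullMeasurableSet measure_ball_lt_top.ne,
    addHaar_closedBall μ x hr, addHaar_ball μ x hs,
    ← ENNReal.sub_mul (fun _ _ => measure_ball_lt_top.ne),
    ← ENNReal.ofReal_sub _ (by positivity)]
  gcongr
  have h := abs_pow_sub_pow_le r s (finrank ℝ E)
  rw [abs_of_nonneg (sub_nonneg.2 hsr), abs_of_nonneg hr, abs_of_nonneg hs,
    max_eq_left hsr] at h
  exact (le_abs_self _).trans (h.trans_eq (by ring))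

theorem volume_pi_closedBall_diff_ball_le {d : ℕ} (hd : 1 ≤ d) (a : Fin d → ℝ) {r w : ℝ}
    (hw : 0 ≤ w) (hwr : w ≤ r) :
    volume (closedBall a r \ ball a (r - w)) ≤ ENNReal.ofReal (2 ^ d * d * r ^ (d - 1) * w) := by
  have : Nonempty (Fin d) := ⟨⟨0, hd⟩⟩
  have hr : 0 ≤ r := hw.trans hwr
  calc volume (closedBall a r \ ball a (r - w))
      ≤ ENNReal.ofReal (d * r ^ (d - 1) * (r - (r - w))) * volume (ball (0 : Fin d → ℝ) 1) := by
        simpa using addHaar_closedBall_diff_ball_le volume a (sub_nonneg.2 hwr) (sub_le_self r hw)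
    _ = ENNReal.ofReal (2 ^ d * d * r ^ (d - 1) * w) := by
        rw [sub_sub_cancel, Real.volume_pi_ball _ one_pos, ← ENNReal.ofReal_mul (by positivity),
          Fintype.card_fin]
        ring_nf

noncomputable def coneBump (γ r t : ℝ) : ℝ := if t ≤ r then (r - t) ^ γ else 0

section coneBump

variable {γ r t ε : ℝ}

theorem coneBump_nonneg : 0 ≤ coneBump γ r t := by
  unfold coneBump
  split_ifs with h
  · exact Real.rpow_nonneg (sub_nonneg.2 h) γ
  · exact le_rfl

theorem le_of_coneBump_pos (h : 0 < coneBump γ r t) : t ≤ r := by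
  by_contra ht
  simp [coneBump, ht] at h

theorem sub_le_rpow_inv_of_coneBump_le (hγ : 0 < γ) (hε : 0 ≤ ε) (ht : t ≤ r)
    (h : coneBump γ r t ≤ ε) : r - t ≤ ε ^ γ⁻¹ := by
  rw [coneBump, if_pos ht] at h
  exact (Real.le_rpow_inv_iff_of_pos (sub_nonneg.2 ht) hε hγ).2 h

theorem rpow_mul_psiTilde_inv_smul {d : ℕ} (hr : 0 < r) (y : Fin d → ℝ) :
    r ^ γ * psiTilde d γ (r⁻¹ • y) = coneBump γ r ‖y‖ := by
  have hnorm : ‖r⁻¹ • y‖ = ‖y‖ / r := by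
    rw [norm_smul, norm_inv, Real.norm_of_nonneg hr.le, inv_mul_eq_div]
  simp only [psiTilde, coneBump, hnorm, div_le_one hr]
  split_ifs with h
  · rw [← Real.mul_rpow hr.le (by rw [sub_nonneg, div_le_one hr]; exact h)]
    congr 1
    field_simp
  · exact mul_zero _

end coneBump

theorem abs_phi0_sub_half {d : ℕ} {γ α Δ C : ℝ} (hΔ : 0 < Δ) (hC : 0 ≤ C) (x : Fin d → ℝ) :
    |phi0 d γ α Δ C x - 1 / 2| =
      C * min Δ (coneBump γ (Δ ^ (α / d)) ‖x - fun _ => Δ ^ (α / d)‖) := by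
  have hr : 0 < Δ ^ (α / d) := Real.rpow_pos_of_pos hΔ _
  rw [phi0, Real.rpow_neg hΔ.le, mul_div_right_comm, Real.rpow_mul hΔ.le,
    rpow_mul_psiTilde_inv_smul hr, sub_sub_cancel_left, abs_neg,
    abs_of_nonneg (mul_nonneg hC (le_min hΔ.le coneBump_nonneg))]

section marginSet

variable {E : Type*} [SeminormedAddCommGroup E] (a : E) {γ r Δ C δ : ℝ}

theorem marginSet_subset_closedBall (hC : 0 ≤ C) :
    {x | 0 < C * min Δ (coneBump γ r ‖x - a‖)} ⊆ closedBall a r := fun _ hx =>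
  mem_closedBall_iff_norm.2 <| le_of_coneBump_pos (lt_min_iff.1 (pos_of_mul_pos_right hx hC)).2

theorem marginSet_subset_shell (hγ : 0 < γ) (hC : 0 < C) (hδ : δ < C * Δ) :
    {x | 0 < C * min Δ (coneBump γ r ‖x - a‖) ∧ C * min Δ (coneBump γ r ‖x - a‖) ≤ δ} ⊆
      closedBall a r \ ball a (r - (δ / C) ^ γ⁻¹) := by
  rintro x ⟨hpos, hle⟩
  have hxr : ‖x - a‖ ≤ r := mem_closedBall_iff_norm.1 (marginSet_subset_closedBall a hC.le hpos)
  have hmin : min Δ (coneBump γ r ‖x - a‖) ≤ δ / C := (le_div_iff₀' hC).2 hle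
  have hbump : coneBump γ r ‖x - a‖ ≤ δ / C :=
    (min_le_iff.1 hmin).resolve_left fun h => hδ.not_ge ((le_div_iff₀' hC).1 h)
  refine ⟨mem_closedBall_iff_norm.2 hxr, fun hx => ?_⟩
  have := sub_le_rpow_inv_of_coneBump_le hγ (div_nonneg (hpos.trans_le hle).le hC.le) hxr hbump
  rw [mem_ball_iff_norm] at hx
  linarith

end marginSet

theorem exists_width_marginSet_subset_shell {E : Type*} [SeminormedAddCommGroup E]
    {d : ℕ} (hd : 1 ≤ d) {γ α Δ C δ : ℝ} (hγ : 0 < γ) (hα : 0 < α) (hαγ : α ≤ γ⁻¹)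
    (hΔ0 : 0 < Δ) (hΔ1 : Δ ≤ 1) (hC : 0 < C) (hδ : 0 < δ) (a : E) :
    ∃ w, 0 ≤ w ∧ w ≤ Δ ^ (α / d) ∧ (Δ ^ (α / d)) ^ (d - 1) * w ≤ (δ / C) ^ α ∧
      {x | 0 < C * min Δ (coneBump γ (Δ ^ (α / d)) ‖x - a‖) ∧
          C * min Δ (coneBump γ (Δ ^ (α / d)) ‖x - a‖) ≤ δ} ⊆
        closedBall a (Δ ^ (α / d)) \ ball a (Δ ^ (α / d) - w) := by
  set r := Δ ^ (α / d)
  set ε := δ / C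
  have hr0 : 0 < r := Real.rpow_pos_of_pos hΔ0 _
  have hε0 : 0 < ε := div_pos hδ hC
  rcases lt_or_ge δ (C * Δ) with hδΔ | hΔδ
  · have hεΔ : ε < Δ := (div_lt_iff₀' hC).2 hδΔ
    refine ⟨ε ^ γ⁻¹, by positivity, ?_, ?_, marginSet_subset_shell a hγ hC hδΔ⟩
    · calc ε ^ γ⁻¹ ≤ Δ ^ γ⁻¹ := Real.rpow_le_rpow hε0.le hεΔ.le (by positivity)
        _ ≤ r := Real.rpow_le_rpow_of_exponent_ge hΔ0 hΔ1
            ((div_le_self hα.le (by exact_mod_cast hd)).trans hαγ)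
    · calc r ^ (d - 1) * ε ^ γ⁻¹ ≤ 1 * ε ^ α :=
            mul_le_mul (pow_le_one₀ hr0.le (Real.rpow_le_one hΔ0.le hΔ1 (by positivity)))
              (Real.rpow_le_rpow_of_exponent_ge hε0 (hεΔ.le.trans hΔ1) hαγ) (by positivity)
              zero_le_one
        _ = ε ^ α := one_mul _
  · refine ⟨r, hr0.le, le_rfl, ?_, ?_⟩
    · rw [pow_sub_one_mul (by omega), ← Real.rpow_mul_natCast hΔ0.le,
        div_mul_cancel₀ _ (by positivity)]
      exact Real.rpow_le_rpow hΔ0.le ((le_div_iff₀' hC).2 hΔδ) hα.le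
    · rw [sub_self, ball_zero, Set.sdiff_empty]
      exact fun x hx => marginSet_subset_closedBall a hC.le hx.1

theorem phi0_margin_condition_general (d : ℕ) (hd : 1 ≤ d) (γ α Δ C ρhi : ℝ)
    (hγ0 : 0 < γ) (hα0 : 0 < α) (hαγ : α ≤ 1 / γ)
    (hΔ0 : 0 < Δ) (hΔ1 : Δ ≤ 1) (hC : 0 < C)
    (μ : Measure (Fin d → ℝ))
    (hμ : ∀ A : Set (Fin d → ℝ), MeasurableSet A →
      μ A ≤ ENNReal.ofReal ρhi * volume (A ∩ Set.Icc (0 : Fin d → ℝ) 1)) :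
    ∀ δ ∈ Set.Ioc (0 : ℝ) 1,
      μ {x : Fin d → ℝ | 0 < |phi0 d γ α Δ C x - 1 / 2| ∧ |phi0 d γ α Δ C x - 1 / 2| ≤ δ}
        ≤ ENNReal.ofReal ((2 : ℝ) ^ d * (d : ℝ) * ρhi * C ^ (-α) * δ ^ α) := by
  rintro δ ⟨hδ0, -⟩
  simp_rw [abs_phi0_sub_half hΔ0 hC.le]
  set r := Δ ^ (α / d)
  obtain ⟨w, hw0, hwr, hw, hS⟩ := exists_width_marginSet_subset_shell hd hγ0 hα0
    (by rwa [one_div] at hαγ) hΔ0 hΔ1 hC hδ0 (fun _ => r : Fin d → ℝ)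
  set shell := closedBall (fun _ => r : Fin d → ℝ) r \ ball (fun _ => r) (r - w)
  calc μ _ ≤ μ shell := measure_mono hS
    _ ≤ ENNReal.ofReal ρhi * volume shell :=
        (hμ _ (measurableSet_closedBall.diff measurableSet_ball)).trans
          (by gcongr; exact Set.inter_subset_left)
    _ ≤ ENNReal.ofReal ρhi * ENNReal.ofReal (2 ^ d * d * r ^ (d - 1) * w) := by
        gcongr; exact volume_pi_closedBall_diff_ball_le hd _ hw0 hwr
    _ ≤ ENNReal.ofReal ρhi * ENNReal.ofReal (2 ^ d * d * (δ / C) ^ α) := by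
        gcongr ENNReal.ofReal ρhi * ENNReal.ofReal ?_
        rw [mul_assoc _ (r ^ _)]
        exact mul_le_mul_of_nonneg_left hw (by positivity)
    _ = ENNReal.ofReal (2 ^ d * d * ρhi * C ^ (-α) * δ ^ α) := by
        rw [← ENNReal.ofReal_mul' (by positivity), Real.div_rpow hδ0.le hC.le,
          Real.rpow_neg hC.le]
        ring_nf

/-- **Margin condition for the nominal instance.** If `γ ∈ (0,1]`, `0 < α ≤ 1/γ`,
`Δ ∈ (0,1]`, `C > 0`, and `μ` is dominated by `ρ̄` times Lebesgue measure on `[0,1]^d`,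
then for every `δ ∈ (0,1]`,
`μ {x : 0 < |φ₀(x) − 1/2| ≤ δ} ≤ 2^d · d · ρ̄ · C^{−α} · δ^α`. -/
theorem phi0_margin_condition (d : ℕ) (hd : 1 ≤ d) (γ α Δ C ρhi : ℝ)
    (hγ0 : 0 < γ) (hγ1 : γ ≤ 1) (hα0 : 0 < α) (hαγ : α ≤ 1 / γ)
    (hΔ0 : 0 < Δ) (hΔ1 : Δ ≤ 1) (hC : 0 < C) (hρ : 0 < ρhi)
    (μ : Measure (Fin d → ℝ))
    (hμ : ∀ A : Set (Fin d → ℝ), MeasurableSet A →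
      μ A ≤ ENNReal.ofReal ρhi * volume (A ∩ Set.Icc (0 : Fin d → ℝ) 1)) :
    ∀ δ ∈ Set.Ioc (0 : ℝ) 1,
      μ {x : Fin d → ℝ | 0 < |phi0 d γ α Δ C x - 1 / 2| ∧ |phi0 d γ α Δ C x - 1 / 2| ≤ δ}
        ≤ ENNReal.ofReal ((2 : ℝ) ^ d * (d : ℝ) * ρhi * C ^ (-α) * δ ^ α) :=
  phi0_margin_condition_general d hd γ α Δ C ρhi hγ0 hα0 hαγ hΔ0 hΔ1 hC μ hμ
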